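/- Let G1, …, Gk be connected nontrivial graphs such that a'(Gi) = Δ(Gi) for each i and max_i a'(Gi) > 1. Then a'(G1 □ ⋯ □ Gk) = Δ(G1 □ ⋯ □ Gk) = Δ(G1) + ⋯ + Δ(Gk). -/

import Mathlib

open SimpleGraph

/-- An edge colouring of `G` is proper if distinct edges sharing a vertex
receive distinct colours. -/
def IsProperEdgeColoring {V : Type*} {γ : Type*} (G : SimpleGraph V) (c : Sym2 V → γ) : Prop :=
  ∀ e₁ ∈ G.edgeSet, ∀ e₂ ∈ G.edgeSet, e₁ ≠ e₂ → (∃ v, v ∈ e₁ ∧ v ∈ e₂) → c e₁ ≠ c e₂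

/-- The subgraph of `G` formed by the union of the colour classes `a` and `b`. -/
def twoColourSubgraph {V : Type*} {γ : Type*} (G : SimpleGraph V) (c : Sym2 V → γ)
    (a b : γ) : SimpleGraph V where
  Adj x y := G.Adj x y ∧ (c s(x, y) = a ∨ c s(x, y) = b)
  symm := ⟨fun x y h => ⟨h.1.symm, by rw [Sym2.eq_swap]; exact h.2⟩⟩
  loopless := ⟨fun x h => G.ne_of_adj h.1 rfl⟩

/-- A proper edge colouring is acyclic if the union of any two colour classes
is a forest. -/
def IsAcyclicEdgeColoring {V : Type*} {γ : Type*} (G : SimpleGraph V) (c : Sym2 V → γ) : Prop :=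
  IsProperEdgeColoring G c ∧ ∀ a b : γ, (twoColourSubgraph G c a b).IsAcyclic

/-- The acyclic chromatic index `a'(G)`: the least number of colours in an
acyclic proper edge colouring of `G`. -/
noncomputable def acyclicChromaticIndex {V : Type*} (G : SimpleGraph V) : ℕ :=
  sInf { n | ∃ c : Sym2 V → Fin n, IsAcyclicEdgeColoring G c }

/-- The cartesian (box) product of a family of graphs: two tuples are adjacent
iff they differ in exactly one coordinate, and are adjacent there. -/
def piBoxProd {ι : Type*} {V : ι → Type*} (G : ∀ i, SimpleGraph (V i)) :
    SimpleGraph (∀ i, V i) where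
  Adj x y := ∃ i, (G i).Adj (x i) (y i) ∧ ∀ j, j ≠ i → x j = y j
  symm := ⟨fun x y => by
    rintro ⟨i, h, hj⟩
    exact ⟨i, h.symm, fun j hji => (hj j hji).symm⟩⟩
  loopless := ⟨fun x => by
    rintro ⟨i, h, -⟩
    exact (G i).ne_of_adj h rfl⟩

/-!
Every proper edge colouring of a graph uses at least `Δ` colours, and `Δ(G₁ □ ⋯ □ G_k)` is
`Δ(G₁) + ⋯ + Δ(G_k)`, so it suffices to colour the product acyclically with that many colours.
Take the factor of largest degree `Δ(G_{i₀}) ≥ 2` and add the other factors one at a time.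

Given an acyclic colouring `c` of `G` with `D ≥ Δ(G_{i₀})` colours, an acyclic colouring `c'` of
`H` with `Δ(H)` colours and a proper vertex colouring `g : V(H) → ℤ/D`, colour the edge
`(u, w)(u', w)` of `G □ H` by `c(uu') + g(w)` and the edge `(u, w)(u, w')` by `c'(ww')` from a
disjoint palette. A cycle in two colours of the same palette stays in one copy of `G` or of `H`.
A cycle using one colour of each kind only meets two layers `w₀, w₁` joined by an `H`-edge,
because each colour class of `c'` is a matching; as `g(w₀) ≠ g(w₁)`, contracting its `H`-edges
leaves a cycle in two colour classes of `c`.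

The vertex colouring `g` exists because `H` is connected with `Δ(H) ≤ D`. If some vertex has
degree `< D`, then every nonempty vertex set `s` contains a vertex with fewer than `D` neighbours
in `s` (that vertex when `s` is everything, a vertex on the boundary of `s` otherwise), so a greedy
colouring works. Otherwise `H` is `D`-regular with `D = Δ(H) ≥ 2`, which is impossible: in an
edge colouring of a `Δ`-regular graph with `Δ` colours, any two colour classes form a `2`-regular
spanning subgraph, and that subgraph has a cycle.
-/

namespace SimpleGraph

section Contraction

variable {X Y : Type*} {S : SimpleGraph X} {F : SimpleGraph Y} {f : X → Y} {P : X → Prop}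

lemma Walk.forall_mem_support (hP : ∀ ⦃x y⦄, S.Adj x y → P x → P y) {x y : X} (p : S.Walk x y)
    (hx : P x) : ∀ z ∈ p.support, P z := by
  induction p with
  | nil => simpa using hx
  | cons h p ih =>
    intro z hz
    rcases List.mem_cons.mp (Walk.support_cons h p ▸ hz) with rfl | hz
    · exact hx
    · exact ih (hP h hx) z hz

lemma Walk.exists_edges_eq_map_filter [DecidableEq Y] (hP : ∀ ⦃x y⦄, S.Adj x y → P x → P y)
    (hf : ∀ ⦃x y⦄, S.Adj x y → P x → f x = f y ∨ F.Adj (f x) (f y)) {x y : X} (p : S.Walk x y)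
    (hx : P x) : ∃ q : F.Walk (f x) (f y),
      q.edges = (p.edges.filter fun e => ¬ (e.map f).IsDiag).map (Sym2.map f) := by
  induction p with
  | nil => exact ⟨.nil, rfl⟩
  | cons h p ih =>
    obtain ⟨q, hq⟩ := ih (hP h hx)
    rcases hf h hx with heq | hadj
    · exact ⟨q.copy heq.symm rfl, by simp [hq, heq]⟩
    · exact ⟨.cons hadj q, by simp [hq, hadj.ne]⟩

/-- A cycle through `P` cannot exist when `f` maps the `P`-part of `S` onto the acyclic `F` by
contracting a family of edges no two of which are consecutive, and is injective on the remaining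
edges. -/
theorem Walk.not_isCycle_of_contraction (hF : F.IsAcyclic) (hP : ∀ ⦃x y⦄, S.Adj x y → P x → P y)
    (hf : ∀ ⦃x y⦄, S.Adj x y → P x → f x = f y ∨ F.Adj (f x) (f y))
    (hinj : ∀ ⦃x x' y y'⦄, S.Adj x x' → S.Adj y y' → P x → P y → f x ≠ f x' →
      s(f x, f x') = s(f y, f y') → s(x, x') = s(y, y'))
    (hcontract : ∀ ⦃x y z⦄, S.Adj x y → S.Adj y z → P x → f x = f y → f y = f z → x = z)
    {x : X} (hx : P x) (c : S.Walk x x) : ¬ c.IsCycle := by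
  classical
  intro hc
  obtain ⟨q, hq⟩ := c.exists_edges_eq_map_filter hP hf hx
  by_cases hnil : q.edges = []
  · have hcollapse : ∀ e ∈ c.edges, (e.map f).IsDiag := by
      simpa [hq, List.filter_eq_nil_iff] using hnil
    cases c with
    | nil => exact hc.ne_nil rfl
    | @cons _ x₁ _ h₁ c =>
      cases c with
      | nil => simpa using hc.three_le_length
      | @cons _ x₂ _ h₂ c =>
        have e₁ : f x = f x₁ := Sym2.mk_isDiag_iff.mp (hcollapse s(x, x₁) (by simp))
        have e₂ : f x₁ = f x₂ := Sym2.mk_isDiag_iff.mp (hcollapse s(x₁, x₂) (by simp))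
        have hx₂ := hcontract h₁ h₂ hx e₁ e₂
        have hnd := hc.edges_nodup
        subst hx₂
        simp [Sym2.eq_swap] at hnd
  · have hsupp := c.forall_mem_support hP hx
    have htrail : q.IsTrail := by
      refine ⟨hq ▸ List.Nodup.map_on ?_ (hc.edges_nodup.filter _)⟩
      intro e he e' he' heq
      induction e using Sym2.ind with | _ y y' => ?_
      induction e' using Sym2.ind with | _ z z' => ?_
      simp only [List.mem_filter, Sym2.map_mk, Sym2.mk_isDiag_iff, decide_not,
        Bool.not_eq_eq_eq_not, Bool.not_true, decide_eq_false_iff_not] at he he' heq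
      exact hinj (c.adj_of_mem_edges he.1) (c.adj_of_mem_edges he'.1)
        (hsupp _ (c.fst_mem_support_of_mem_edges he.1))
        (hsupp _ (c.fst_mem_support_of_mem_edges he'.1)) he.2 heq
    have hnil' := Walk.isPath_iff_nil.mp ((hF.isPath_iff_isTrail q).mpr htrail)
    exact hnil (hnil'.eq_nil ▸ rfl)

end Contraction

section VertexColoring

variable {V : Type*} {G : SimpleGraph V}

lemma IsAcyclic.exists_neighborSet_subsingleton [Finite V] [Nonempty V] (hG : G.IsAcyclic) :
    ∃ v, (G.neighborSet v).Subsingleton := by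
  obtain ⟨u, v, p, hp, hmax⟩ := Walk.exists_isPath_forall_isPath_length_le_length G
  -- a neighbour of `u` other than `p.snd` would extend the longest path `p`
  have hsnd : ∀ w, G.Adj u w → w = p.snd := fun w hw => by
    by_contra hne
    have := hmax _ _ (p.cons hw.symm)
      (hp.cons fun hmem => hne (hG.eq_snd_of_adj_start hp hw hmem))
    simp at this
  exact ⟨u, fun w hw w' hw' => (hsnd w hw).trans (hsnd w' hw').symm⟩

lemma colorable_of_forall_exists_card_lt [Fintype V] [DecidableRel G.Adj] {n : ℕ}
    (h : ∀ s : Finset V, s.Nonempty → ∃ v ∈ s, (s.filter (G.Adj v)).card < n) :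
    G.Colorable n := by
  classical
  cases isEmpty_or_nonempty V
  · exact .of_isEmpty n
  have hn : 0 < n := by
    obtain ⟨_, _, h⟩ := h Finset.univ Finset.univ_nonempty
    omega
  suffices ∀ s : Finset V, ∃ g : V → Fin n, ∀ v ∈ s, ∀ w ∈ s, G.Adj v w → g v ≠ g w by
    obtain ⟨g, hg⟩ := this Finset.univ
    exact ⟨.mk g fun h => hg _ (Finset.mem_univ _) _ (Finset.mem_univ _) h⟩
  intro s
  induction s using Finset.strongInduction with
  | H s ih =>
    obtain rfl | hs := s.eq_empty_or_nonempty
    · exact ⟨fun _ => ⟨0, hn⟩, by simp⟩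
    obtain ⟨v, hv, hcard⟩ := h s hs
    obtain ⟨g, hg⟩ := ih (s.erase v) (Finset.erase_ssubset hv)
    obtain ⟨a, -, ha⟩ : ∃ a ∈ Finset.univ, a ∉ (s.filter (G.Adj v)).image g :=
      Finset.exists_mem_notMem_of_card_lt_card (by simpa using Finset.card_image_le.trans_lt hcard)
    have hfresh : ∀ y ∈ s, G.Adj v y → a ≠ g y := fun y hy hvy he =>
      ha (he ▸ Finset.mem_image_of_mem g (by simp [hy, hvy]))
    refine ⟨Function.update g v a, fun x hx y hy hxy => ?_⟩
    by_cases hxv : x = v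
    · subst hxv
      simpa [Function.update_of_ne hxy.ne'] using hfresh y hy hxy
    by_cases hyv : y = v
    · subst hyv
      simpa [Function.update_of_ne hxv] using (hfresh x hx hxy.symm).symm
    simpa [Function.update_of_ne hxv, Function.update_of_ne hyv] using
      hg x (Finset.mem_erase.mpr ⟨hxv, hx⟩) y (Finset.mem_erase.mpr ⟨hyv, hy⟩) hxy

lemma Connected.colorable_of_degree_le_of_degree_lt [Fintype V] [DecidableRel G.Adj]
    (hG : G.Connected) {n : ℕ} {v₀ : V} (hdeg : ∀ v, G.degree v ≤ n) (hv₀ : G.degree v₀ < n) :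
    G.Colorable n := by
  classical
  refine colorable_of_forall_exists_card_lt fun s hs => ?_
  by_cases hsu : s = Finset.univ
  · subst hsu
    exact ⟨v₀, Finset.mem_univ _, (Finset.card_le_card fun w hw => by simpa using hw).trans_lt hv₀⟩
  -- since `G` is connected, some vertex of `s` has a neighbour outside `s`
  obtain ⟨x, hx⟩ := hs
  obtain ⟨y, hy⟩ := by simpa [Finset.eq_univ_iff_forall] using hsu
  obtain ⟨d, -, hd₁, hd₂⟩ := (hG.preconnected x y).some.exists_boundary_dart (s : Set V) hx hy
  refine ⟨d.fst, hd₁, ?_⟩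
  calc (s.filter (G.Adj d.fst)).card ≤ ((G.neighborFinset d.fst).erase d.snd).card :=
        Finset.card_le_card fun w hw => by
          simp only [Finset.mem_filter] at hw
          simpa using ⟨fun h => hd₂ (h ▸ hw.1), hw.2⟩
    _ < G.degree d.fst := Finset.card_erase_lt_of_mem (by simp [d.adj])
    _ ≤ n := hdeg _

end VertexColoring

end SimpleGraph

section EdgeColoring

variable {V W γ δ : Type*} {G : SimpleGraph V} {c : Sym2 V → γ}

def AcyclicEdgeColorable (G : SimpleGraph V) (n : ℕ) : Prop :=
  ∃ c : Sym2 V → Fin n, IsAcyclicEdgeColoring G c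

@[simp]
lemma twoColourSubgraph_adj {a b : γ} {x y : V} :
    (twoColourSubgraph G c a b).Adj x y ↔ G.Adj x y ∧ (c s(x, y) = a ∨ c s(x, y) = b) :=
  Iff.rfl

lemma twoColourSubgraph_comm (a b : γ) : twoColourSubgraph G c a b = twoColourSubgraph G c b a := by
  ext
  simp [or_comm]

lemma IsProperEdgeColoring.eq_of_adj_of_adj (hc : IsProperEdgeColoring G c) {v w₁ w₂ : V}
    (h₁ : G.Adj v w₁) (h₂ : G.Adj v w₂) (h : c s(v, w₁) = c s(v, w₂)) : w₁ = w₂ := by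
  by_contra hne
  exact hc _ h₁ _ h₂ (fun he => hne (Sym2.congr_right.mp he))
    ⟨v, Sym2.mem_mk_left _ _, Sym2.mem_mk_left _ _⟩ h

lemma IsProperEdgeColoring.exists_partner (hc : IsProperEdgeColoring G c) (v : V) (a : γ) :
    ∃ w, (∀ w', G.Adj v w' → c s(v, w') = a → w' = w) ∧ (w ≠ v → G.Adj v w ∧ c s(v, w) = a) := by
  by_cases h : ∃ w, G.Adj v w ∧ c s(v, w) = a
  · obtain ⟨w, hw, hwa⟩ := h
    exact ⟨w, fun w' hw' hw'a => hc.eq_of_adj_of_adj hw' hw (hw'a.trans hwa.symm),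
      fun _ => ⟨hw, hwa⟩⟩
  · exact ⟨v, fun w hw hwa => absurd ⟨w, hw, hwa⟩ h, fun h => absurd rfl h⟩

lemma IsProperEdgeColoring.injOn_neighborFinset [Fintype V] [DecidableRel G.Adj]
    (hc : IsProperEdgeColoring G c) (v : V) :
    Set.InjOn (fun w => c s(v, w)) (G.neighborFinset v : Set V) := fun _ h₁ _ h₂ h =>
  hc.eq_of_adj_of_adj (by simpa using h₁) (by simpa using h₂) h

lemma IsProperEdgeColoring.maxDegree_le [Fintype V] [DecidableRel G.Adj] {n : ℕ}
    {c : Sym2 V → Fin n} (hc : IsProperEdgeColoring G c) : G.maxDegree ≤ n := by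
  refine maxDegree_le_of_forall_degree_le _ _ fun v => ?_
  simpa using Finset.card_le_card_of_injOn _ (fun _ _ => Finset.mem_univ _)
    (hc.injOn_neighborFinset v)

lemma IsProperEdgeColoring.exists_adj_eq [Fintype V] [DecidableRel G.Adj] {d : ℕ}
    {c : Sym2 V → Fin d} (hc : IsProperEdgeColoring G c) {v : V} (hv : G.degree v = d)
    (a : Fin d) : ∃ w, G.Adj v w ∧ c s(v, w) = a := by
  obtain ⟨w, hw, rfl⟩ := Finset.surj_on_of_inj_on_of_card_le (t := Finset.univ)
    (fun w _ => c s(v, w)) (fun _ _ => Finset.mem_univ _)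
    (fun _ _ h₁ h₂ => hc.injOn_neighborFinset v h₁ h₂) (by simp [hv]) a (Finset.mem_univ _)
  exact ⟨w, by simpa using hw, rfl⟩

lemma IsAcyclicEdgeColoring.comp_equiv (hc : IsAcyclicEdgeColoring G c) (φ : γ ≃ δ) :
    IsAcyclicEdgeColoring G (φ ∘ c) := by
  refine ⟨fun e₁ h₁ e₂ h₂ hne hshare h => hc.1 e₁ h₁ e₂ h₂ hne hshare (φ.injective h),
    fun a b => ?_⟩
  convert hc.2 (φ.symm a) (φ.symm b) using 1
  ext
  simp [Equiv.eq_symm_apply]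

lemma IsAcyclicEdgeColoring.comap_iso {G' : SimpleGraph W} (e : G ≃g G') {c : Sym2 W → γ}
    (hc : IsAcyclicEdgeColoring G' c) : IsAcyclicEdgeColoring G (c ∘ Sym2.map e) := by
  refine ⟨fun e₁ h₁ e₂ h₂ hne ⟨v, hv₁, hv₂⟩ h => ?_, fun a b => ?_⟩
  · exact hc.1 _ (e.map_mem_edgeSet_iff.mpr h₁) _ (e.map_mem_edgeSet_iff.mpr h₂)
      ((Sym2.map.injective e.injective).ne hne)
      ⟨e v, Sym2.mem_map.mpr ⟨v, hv₁, rfl⟩, Sym2.mem_map.mpr ⟨v, hv₂, rfl⟩⟩ h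
  · refine (hc.2 a b).comap (G := twoColourSubgraph G (c ∘ Sym2.map e) a b)
      ⟨e, fun h => ?_⟩ e.injective
    exact ⟨e.map_adj_iff.mpr h.1, by simpa using h.2⟩

lemma AcyclicEdgeColorable.of_iso {G' : SimpleGraph W} (e : G ≃g G') {n : ℕ}
    (h : AcyclicEdgeColorable G' n) : AcyclicEdgeColorable G n :=
  let ⟨_, hc⟩ := h
  ⟨_, hc.comap_iso e⟩

lemma isAcyclicEdgeColoring_of_injective (hc : Function.Injective c) :
    IsAcyclicEdgeColoring G c := by
  classical
  refine ⟨fun e₁ _ e₂ _ hne _ h => hne (hc h), fun a b v p hp => ?_⟩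
  -- the colours along a cycle are distinct, but there are only two of them
  have hcol : (p.edges.map c).toFinset ⊆ {a, b} := by
    intro x hx
    obtain ⟨e, he, rfl⟩ := List.mem_map.mp (List.mem_toFinset.mp hx)
    induction e using Sym2.ind with
    | _ y z => simpa using (p.adj_of_mem_edges he).2
  have := Finset.card_le_card hcol
  rw [List.toFinset_card_of_nodup (hp.edges_nodup.map hc), List.length_map,
    Walk.length_edges] at this
  have := Finset.card_le_two (a := a) (b := b)
  have := hp.three_le_length
  omega

lemma acyclicEdgeColorable_acyclicChromaticIndex [Finite V] (G : SimpleGraph V) :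
    AcyclicEdgeColorable G (acyclicChromaticIndex G) :=
  Nat.sInf_mem (s := {n | AcyclicEdgeColorable G n}) ⟨_, Finite.equivFin (Sym2 V),
    isAcyclicEdgeColoring_of_injective (Finite.equivFin (Sym2 V)).injective⟩

lemma acyclicChromaticIndex_eq_maxDegree [Fintype V] [DecidableRel G.Adj]
    (h : AcyclicEdgeColorable G G.maxDegree) : acyclicChromaticIndex G = G.maxDegree :=
  le_antisymm (Nat.sInf_le h) (le_csInf ⟨_, h⟩ fun _ ⟨_, hc⟩ => hc.1.maxDegree_le)

lemma IsAcyclicEdgeColoring.not_isRegularOfDegree [Fintype V] [Nonempty V] [DecidableRel G.Adj]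
    {d : ℕ} {c : Sym2 V → Fin d} (hc : IsAcyclicEdgeColoring G c) (hd : 2 ≤ d) :
    ¬ G.IsRegularOfDegree d := by
  intro hreg
  let a : Fin d := ⟨0, by omega⟩
  let b : Fin d := ⟨1, by omega⟩
  obtain ⟨v, hv⟩ := (hc.2 a b).exists_neighborSet_subsingleton
  obtain ⟨w, hw, hwa⟩ := hc.1.exists_adj_eq (hreg v) a
  obtain ⟨w', hw', hwb⟩ := hc.1.exists_adj_eq (hreg v) b
  obtain rfl : w = w' := hv (show (twoColourSubgraph G c a b).Adj v w from ⟨hw, .inl hwa⟩)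
    (show (twoColourSubgraph G c a b).Adj v w' from ⟨hw', .inr hwb⟩)
  simpa [a, b, Fin.ext_iff] using hwa.symm.trans hwb

theorem SimpleGraph.Connected.colorable_of_acyclicEdgeColorable [Fintype V] [DecidableRel G.Adj]
    (hG : G.Connected) (hcol : AcyclicEdgeColorable G G.maxDegree) {n : ℕ}
    (hΔ : G.maxDegree ≤ n) (hn : 2 ≤ n) : G.Colorable n := by
  have hdeg : ∀ v, G.degree v ≤ n := fun v => (G.degree_le_maxDegree v).trans hΔ
  by_cases h : ∃ v, G.degree v < n
  · obtain ⟨v, hv⟩ := h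
    exact hG.colorable_of_degree_le_of_degree_lt hdeg hv
  simp only [not_exists, not_lt] at h
  have := hG.nonempty
  obtain ⟨c, hc⟩ := hcol
  have hΔn : G.maxDegree = n :=
    hΔ.antisymm ((h (Classical.arbitrary V)).trans (G.degree_le_maxDegree _))
  exact absurd (fun v => ((hdeg v).antisymm (h v)).trans hΔn.symm)
    (hc.not_isRegularOfDegree (hΔn ▸ hn))

end EdgeColoring

section BoxProd

variable {V W α β : Type*} {G : SimpleGraph V} {H : SimpleGraph W} [DecidableEq W] [AddGroup α]
  {cG : Sym2 V → α} {cH : Sym2 W → β} {g : W → α}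

variable (cG cH g) in
def boxProdEdgeColoring : Sym2 (V × W) → α ⊕ β :=
  Sym2.lift ⟨fun x y => if x.2 = y.2 then .inl (cG s(x.1, y.1) + g x.2) else .inr (cH s(x.2, y.2)),
    fun x y => by
      by_cases h : x.2 = y.2
      · simp [h, Sym2.eq_swap]
      · simp [h, Ne.symm h, Sym2.eq_swap]⟩

lemma boxProdEdgeColoring_eq_inl {x y : V × W} (hxy : (G □ H).Adj x y) {a : α}
    (ha : boxProdEdgeColoring cG cH g s(x, y) = .inl a) :
    G.Adj x.1 y.1 ∧ x.2 = y.2 ∧ cG s(x.1, y.1) = a - g x.2 := by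
  by_cases h : x.2 = y.2
  · simp only [boxProdEdgeColoring, Sym2.lift_mk, if_pos h, Sum.inl.injEq] at ha
    exact ⟨(boxProd_adj.mp hxy).resolve_right (fun h' => h'.1.ne h) |>.1, h, eq_sub_of_add_eq ha⟩
  · simp [boxProdEdgeColoring, h] at ha

lemma boxProdEdgeColoring_eq_inr {x y : V × W} (hxy : (G □ H).Adj x y) {b : β}
    (hb : boxProdEdgeColoring cG cH g s(x, y) = .inr b) :
    H.Adj x.2 y.2 ∧ x.1 = y.1 ∧ cH s(x.2, y.2) = b := by
  by_cases h : x.2 = y.2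
  · simp [boxProdEdgeColoring, h] at hb
  · simp only [boxProdEdgeColoring, Sym2.lift_mk, if_neg h, Sum.inr.injEq] at hb
    exact ⟨(boxProd_adj.mp hxy).resolve_left (fun h' => h h'.2) |>.1,
      ((boxProd_adj.mp hxy).resolve_left (fun h' => h h'.2)).2, hb⟩

lemma IsProperEdgeColoring.boxProd (hcG : IsProperEdgeColoring G cG)
    (hcH : IsProperEdgeColoring H cH) :
    IsProperEdgeColoring (G □ H) (boxProdEdgeColoring cG cH g) := by
  intro e₁ he₁ e₂ he₂ hne ⟨z, hz₁, hz₂⟩ heq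
  obtain ⟨p, rfl⟩ := Sym2.mem_iff_exists.mp hz₁
  obtain ⟨q, rfl⟩ := Sym2.mem_iff_exists.mp hz₂
  suffices p = q from hne (by rw [this])
  rcases hcol : boxProdEdgeColoring cG cH g s(z, p) with a | b
  · obtain ⟨hp, hpz, hpa⟩ := boxProdEdgeColoring_eq_inl he₁ hcol
    obtain ⟨hq, hqz, hqa⟩ := boxProdEdgeColoring_eq_inl he₂ (heq ▸ hcol)
    exact Prod.ext (hcG.eq_of_adj_of_adj hp hq (hpa.trans hqa.symm)) (hpz.symm.trans hqz)
  · obtain ⟨hp, hpz, hpb⟩ := boxProdEdgeColoring_eq_inr he₁ hcol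
    obtain ⟨hq, hqz, hqb⟩ := boxProdEdgeColoring_eq_inr he₂ (heq ▸ hcol)
    exact Prod.ext (hpz.symm.trans hqz) (hcH.eq_of_adj_of_adj hp hq (hpb.trans hqb.symm))

lemma isAcyclic_twoColourSubgraph_boxProdEdgeColoring_inl_inl (hcG : IsAcyclicEdgeColoring G cG)
    (a a' : α) :
    (twoColourSubgraph (G □ H) (boxProdEdgeColoring cG cH g) (.inl a) (.inl a')).IsAcyclic := by
  have hS : ∀ ⦃x y : V × W⦄,
      (twoColourSubgraph (G □ H) (boxProdEdgeColoring cG cH g) (.inl a) (.inl a')).Adj x y →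
      (twoColourSubgraph G cG (a - g x.2) (a' - g x.2)).Adj x.1 y.1 ∧ x.2 = y.2 := by
    rintro x y ⟨hxy, hcol | hcol⟩
    · obtain ⟨h, h₂, hc⟩ := boxProdEdgeColoring_eq_inl hxy hcol
      exact ⟨⟨h, .inl hc⟩, h₂⟩
    · obtain ⟨h, h₂, hc⟩ := boxProdEdgeColoring_eq_inl hxy hcol
      exact ⟨⟨h, .inr hc⟩, h₂⟩
  intro x₀ c
  refine Walk.not_isCycle_of_contraction (hcG.2 (a - g x₀.2) (a' - g x₀.2)) (f := Prod.fst)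
    (P := fun x => x.2 = x₀.2) (fun x y h hx => (hS h).2.symm.trans hx)
    (fun x y h hx => .inr (hx ▸ (hS h).1)) ?_ (fun _ _ _ h _ _ he _ => absurd he (hS h).1.ne) rfl c
  rintro ⟨x, w⟩ ⟨x', w'⟩ ⟨y, v⟩ ⟨y', v'⟩ hx hy hPx hPy - he
  obtain rfl := (hS hx).2
  obtain rfl := (hS hy).2
  obtain rfl : w = v := hPx.trans hPy.symm
  simpa using congrArg (Sym2.map (·, w)) he

lemma isAcyclic_twoColourSubgraph_boxProdEdgeColoring_inr_inr (hcH : IsAcyclicEdgeColoring H cH)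
    (b b' : β) :
    (twoColourSubgraph (G □ H) (boxProdEdgeColoring cG cH g) (.inr b) (.inr b')).IsAcyclic := by
  have hS : ∀ ⦃x y : V × W⦄,
      (twoColourSubgraph (G □ H) (boxProdEdgeColoring cG cH g) (.inr b) (.inr b')).Adj x y →
      (twoColourSubgraph H cH b b').Adj x.2 y.2 ∧ x.1 = y.1 := by
    rintro x y ⟨hxy, hcol | hcol⟩
    · obtain ⟨h, h₁, hc⟩ := boxProdEdgeColoring_eq_inr hxy hcol
      exact ⟨⟨h, .inl hc⟩, h₁⟩
    · obtain ⟨h, h₁, hc⟩ := boxProdEdgeColoring_eq_inr hxy hcol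
      exact ⟨⟨h, .inr hc⟩, h₁⟩
  intro x₀ c
  refine Walk.not_isCycle_of_contraction (hcH.2 b b') (f := Prod.snd)
    (P := fun x => x.1 = x₀.1) (fun x y h hx => (hS h).2.symm.trans hx)
    (fun x y h _ => .inr (hS h).1) ?_ (fun _ _ _ h _ _ he _ => absurd he (hS h).1.ne) rfl c
  rintro ⟨x, w⟩ ⟨x', w'⟩ ⟨y, v⟩ ⟨y', v'⟩ hx hy hPx hPy - he
  obtain rfl := (hS hx).2
  obtain rfl := (hS hy).2
  obtain rfl : x = y := hPx.trans hPy.symm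
  simpa using congrArg (Sym2.map (x, ·)) he

lemma isAcyclic_twoColourSubgraph_boxProdEdgeColoring_inl_inr (hcG : IsAcyclicEdgeColoring G cG)
    (hcH : IsProperEdgeColoring H cH) (hg : ∀ ⦃v w⦄, H.Adj v w → g v ≠ g w) (a : α) (b : β) :
    (twoColourSubgraph (G □ H) (boxProdEdgeColoring cG cH g) (.inl a) (.inr b)).IsAcyclic := by
  have hS : ∀ ⦃x y : V × W⦄,
      (twoColourSubgraph (G □ H) (boxProdEdgeColoring cG cH g) (.inl a) (.inr b)).Adj x y →
      (G.Adj x.1 y.1 ∧ x.2 = y.2 ∧ cG s(x.1, y.1) = a - g x.2) ∨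
      (H.Adj x.2 y.2 ∧ x.1 = y.1 ∧ cH s(x.2, y.2) = b) := by
    rintro x y ⟨hxy, hcol | hcol⟩
    exacts [.inl (boxProdEdgeColoring_eq_inl hxy hcol), .inr (boxProdEdgeColoring_eq_inr hxy hcol)]
  have hb : ∀ ⦃w w₁ w₂⦄, H.Adj w w₁ → H.Adj w w₂ → cH s(w, w₁) = b → cH s(w, w₂) = b →
      w₁ = w₂ := fun _ _ _ h₁ h₂ e₁ e₂ => hcH.eq_of_adj_of_adj h₁ h₂ (e₁.trans e₂.symm)
  rintro ⟨u₀, w₀⟩ c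
  -- the `b`-edges of `H` form a matching, so a cycle through layer `w₀` stays in the layers
  -- `w₀` and `w₁`, its partner (if any)
  obtain ⟨w₁, hw₁, hw₀₁⟩ := hcH.exists_partner w₀ b
  refine Walk.not_isCycle_of_contraction (hcG.2 (a - g w₀) (a - g w₁)) (f := Prod.fst)
    (P := fun x => x.2 = w₀ ∨ x.2 = w₁) ?hP ?hf ?hinj ?hcontract (.inl rfl) c
  case hP =>
    intro x y hxy hx
    rcases hS hxy with ⟨-, h, -⟩ | ⟨h, -, e⟩
    · exact h ▸ hx
    rcases hx with hx | hx
    · exact .inr (hw₁ _ (hx ▸ h) (hx ▸ e))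
    by_cases h01 : w₁ = w₀
    · exact .inr (hw₁ _ (hx.trans h01 ▸ h) (hx.trans h01 ▸ e))
    · obtain ⟨h', e'⟩ := hw₀₁ h01
      exact .inl (hb (hx ▸ h) h'.symm (hx ▸ e) (Sym2.eq_swap ▸ e'))
  case hf =>
    intro x y hxy hx
    rcases hS hxy with ⟨h, -, e⟩ | ⟨-, h, -⟩
    · rcases hx with hx | hx
      exacts [.inr ⟨h, .inl (hx ▸ e)⟩, .inr ⟨h, .inr (hx ▸ e)⟩]
    · exact .inl h
  case hinj =>
    rintro ⟨x, w⟩ ⟨x', w'⟩ ⟨y, v⟩ ⟨y', v'⟩ hx hy hPx hPy hne he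
    dsimp only at hne he hPx hPy
    have hne' : y ≠ y' := fun h => hne (Sym2.mk_isDiag_iff.mp (he ▸ Sym2.mk_isDiag_iff.mpr h))
    obtain ⟨-, rfl, ex⟩ := (hS hx).resolve_right fun h => hne h.2.1
    obtain ⟨-, rfl, ey⟩ := (hS hy).resolve_right fun h => hne' h.2.1
    -- otherwise `{w, v} = {w₀, w₁}` would be an edge of `H` on which `g` is constant
    obtain rfl : w = v := by
      by_contra hwv
      have hgwv : g w = g v := sub_right_injective (ex.symm.trans ((congrArg cG he).trans ey))
      have h01 : w₁ ≠ w₀ := by grind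
      have := hg (hw₀₁ h01).1
      grind
    simpa using congrArg (Sym2.map (·, w)) he
  case hcontract =>
    intro x y z hxy hyz _ hfxy hfyz
    obtain ⟨h₁, e₁, c₁⟩ := (hS hxy).resolve_left fun h => h.1.ne hfxy
    obtain ⟨h₂, e₂, c₂⟩ := (hS hyz).resolve_left fun h => h.1.ne hfyz
    exact Prod.ext (e₁.trans e₂) (hb h₁.symm h₂ (Sym2.eq_swap ▸ c₁) c₂)

theorem IsAcyclicEdgeColoring.boxProd (hcG : IsAcyclicEdgeColoring G cG)
    (hcH : IsAcyclicEdgeColoring H cH) (hg : ∀ ⦃v w⦄, H.Adj v w → g v ≠ g w) :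
    IsAcyclicEdgeColoring (G □ H) (boxProdEdgeColoring cG cH g) := by
  refine ⟨hcG.1.boxProd hcH.1, ?_⟩
  rintro (a | b) (a' | b')
  · exact isAcyclic_twoColourSubgraph_boxProdEdgeColoring_inl_inl hcG a a'
  · exact isAcyclic_twoColourSubgraph_boxProdEdgeColoring_inl_inr hcG hcH.1 hg a b'
  · rw [twoColourSubgraph_comm]
    exact isAcyclic_twoColourSubgraph_boxProdEdgeColoring_inl_inr hcG hcH.1 hg a' b
  · exact isAcyclic_twoColourSubgraph_boxProdEdgeColoring_inr_inr hcH b b'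

end BoxProd

theorem AcyclicEdgeColorable.boxProd {V W : Type*} {G : SimpleGraph V} {H : SimpleGraph W}
    {a b : ℕ} [NeZero a] (hG : AcyclicEdgeColorable G a) (hH : AcyclicEdgeColorable H b)
    (hHa : H.Colorable a) : AcyclicEdgeColorable (G □ H) (a + b) := by
  classical
  obtain ⟨cG, hcG⟩ := hG
  obtain ⟨cH, hcH⟩ := hH
  obtain ⟨C⟩ := hHa
  exact ⟨_, (hcG.boxProd hcH fun _ _ h => C.valid h).comp_equiv finSumFinEquiv⟩

section PiBoxProd

variable {ι : Type*} {V : ι → Type*} (G : ∀ i, SimpleGraph (V i))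

@[simp]
lemma piBoxProd_adj {x y : ∀ i, V i} :
    (piBoxProd G).Adj x y ↔ ∃ i, (G i).Adj (x i) (y i) ∧ ∀ j, j ≠ i → x j = y j :=
  Iff.rfl

lemma degree_piBoxProd [Fintype ι] [DecidableEq ι] [∀ i, Fintype (V i)]
    [∀ i, DecidableRel (G i).Adj] [DecidableRel (piBoxProd G).Adj] (x : ∀ i, V i) :
    (piBoxProd G).degree x = ∑ i, (G i).degree (x i) := by
  let φ : (Σ i, (G i).neighborSet (x i)) → (piBoxProd G).neighborSet x := fun p =>
    ⟨Function.update x p.1 p.2, p.1, by rw [Function.update_self]; exact p.2.2,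
      fun j hj => by simp [hj]⟩
  have hφ : Function.Bijective φ := by
    constructor
    · rintro ⟨i, w, hw⟩ ⟨i', w', hw'⟩ h
      replace h := congrArg Subtype.val h
      obtain rfl | hii' := eq_or_ne i i'
      · obtain rfl : w = w' := by simpa [φ] using congrFun h i
        rfl
      · have hwx : w = x i := by simpa [φ, hii'] using congrFun h i
        exact (hw.ne hwx.symm).elim
    · rintro ⟨y, i, hy, hyi⟩
      refine ⟨⟨i, y i, hy⟩, Subtype.ext (funext fun j => ?_)⟩
      obtain rfl | hj := eq_or_ne j i
      · simp [φ]
      · simp [φ, hj, hyi j hj]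
  simp_rw [← card_neighborSet_eq_degree, ← Fintype.card_sigma]
  exact (Fintype.card_of_bijective hφ).symm

lemma maxDegree_piBoxProd [Fintype ι] [DecidableEq ι] [∀ i, Fintype (V i)] [∀ i, Nonempty (V i)]
    [∀ i, DecidableRel (G i).Adj] [DecidableRel (piBoxProd G).Adj] :
    (piBoxProd G).maxDegree = ∑ i, (G i).maxDegree := by
  refine le_antisymm (maxDegree_le_of_forall_degree_le _ _ fun x => ?_) ?_
  · rw [degree_piBoxProd]
    exact Finset.sum_le_sum fun i _ => (G i).degree_le_maxDegree _
  · choose x hx using fun i => (G i).exists_maximal_degree_vertex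
    calc ∑ i, (G i).maxDegree = (piBoxProd G).degree x := by simp [degree_piBoxProd, hx]
      _ ≤ _ := degree_le_maxDegree _ _

def piBoxProdSplitAt [DecidableEq ι] (i : ι) :
    piBoxProd G ≃g piBoxProd (fun j : {j // j ≠ i} => G j) □ G i where
  toEquiv := (Equiv.piSplitAt i V).trans (Equiv.prodComm _ _)
  map_rel_iff' {x y} := by
    simp only [Equiv.trans_apply, Equiv.piSplitAt_apply, Equiv.prodComm_apply, Prod.swap_prod_mk,
      boxProd_adj, piBoxProd_adj, funext_iff]
    constructor
    · rintro (⟨⟨⟨j, hj⟩, hadj, hrest⟩, hi⟩ | ⟨hadj, hrest⟩)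
      · refine ⟨j, hadj, fun k hk => ?_⟩
        obtain rfl | hki := eq_or_ne k i
        exacts [hi, hrest ⟨k, hki⟩ (by simpa [Subtype.ext_iff] using hk)]
      · exact ⟨i, hadj, fun k hk => hrest ⟨k, hk⟩⟩
    · rintro ⟨j, hadj, hrest⟩
      obtain rfl | hji := eq_or_ne j i
      · exact .inr ⟨hadj, fun k => hrest k k.2⟩
      · refine .inl ⟨⟨⟨j, hji⟩, hadj, fun k hk => hrest k ?_⟩, hrest i (Ne.symm hji)⟩
        simpa [Subtype.ext_iff] using hk

def piBoxProdUnique [Unique ι] : piBoxProd G ≃g G default where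
  toEquiv := Equiv.piUnique V
  map_rel_iff' {x y} := by
    simp only [Equiv.piUnique_apply, piBoxProd_adj]
    refine ⟨fun h => ⟨default, h, fun j hj => absurd (Unique.eq_default j) hj⟩, ?_⟩
    rintro ⟨j, hadj, -⟩
    rwa [Unique.eq_default j] at hadj

end PiBoxProd

theorem acyclicEdgeColorable_piBoxProd {ι : Type*} [Fintype ι] {V : ι → Type*}
    [∀ i, Fintype (V i)] {G : ∀ i, SimpleGraph (V i)} [∀ i, DecidableRel (G i).Adj]
    (hconn : ∀ i, (G i).Connected) (hcol : ∀ i, AcyclicEdgeColorable (G i) (G i).maxDegree)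
    {i₀ : ι} (h₀ : 2 ≤ (G i₀).maxDegree) (hmax : ∀ i, (G i).maxDegree ≤ (G i₀).maxDegree) :
    AcyclicEdgeColorable (piBoxProd G) (∑ i, (G i).maxDegree) := by
  classical
  induction hn : Fintype.card ι using Nat.strong_induction_on generalizing ι with
  | _ n ih =>
  rcases subsingleton_or_nontrivial ι with hι | hι
  · let _ : Unique ι := ⟨⟨i₀⟩, fun _ => Subsingleton.elim _ _⟩
    rw [Fintype.sum_subsingleton _ i₀]
    exact (hcol i₀).of_iso (piBoxProdUnique G)
  -- split off a factor `G i` with `i ≠ i₀`; the remaining factors need `D ≥ Δ(G i₀)` colours,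
  -- enough to properly colour the vertices of `G i`
  obtain ⟨i, hi⟩ := exists_ne i₀
  have hrest := ih _ (hn ▸ Fintype.card_subtype_lt (p := (· ≠ i)) (not_not.mpr rfl))
    (G := fun j : {j // j ≠ i} => G j) (fun j => hconn j) (fun j => hcol j) (i₀ := ⟨i₀, hi.symm⟩)
    h₀ (fun j => hmax j) rfl
  set D := ∑ j : {j // j ≠ i}, (G j).maxDegree
  have hD : (G i₀).maxDegree ≤ D :=
    Finset.single_le_sum (f := fun j : {j // j ≠ i} => (G j).maxDegree) (fun _ _ => Nat.zero_le _)
      (Finset.mem_univ ⟨i₀, hi.symm⟩)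
  have : NeZero D := ⟨by omega⟩
  have hcolorable := (hconn i).colorable_of_acyclicEdgeColorable (hcol i) ((hmax i).trans hD)
    (h₀.trans hD)
  rw [Fintype.sum_eq_add_sum_subtype_ne _ i, add_comm]
  exact (hrest.boxProd (hcol i) hcolorable).of_iso (piBoxProdSplitAt G i)

theorem acyclicChromaticIndex_piBoxProd_general {k : ℕ} {V : Fin k → Type*}
    [∀ i, Fintype (V i)] (G : ∀ i, SimpleGraph (V i))
    [∀ i, DecidableRel (G i).Adj] (hconn : ∀ i, (G i).Connected)
    (heq : ∀ i, acyclicChromaticIndex (G i) = (G i).maxDegree)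
    (hmax : ∃ i, 1 < acyclicChromaticIndex (G i)) :
    acyclicChromaticIndex (piBoxProd G) =
        @SimpleGraph.maxDegree _ (piBoxProd G) _ (Classical.decRel _) ∧
      @SimpleGraph.maxDegree _ (piBoxProd G) _ (Classical.decRel _) =
        ∑ i, (G i).maxDegree := by
  have := fun i => (hconn i).nonempty
  obtain ⟨i₁, hi₁⟩ := hmax
  have : Nonempty (Fin k) := ⟨i₁⟩
  obtain ⟨i₀, hi₀⟩ := Finite.exists_max fun i => (G i).maxDegree
  have hcol i : AcyclicEdgeColorable (G i) (G i).maxDegree :=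
    heq i ▸ acyclicEdgeColorable_acyclicChromaticIndex (G i)
  let _ : DecidableRel (piBoxProd G).Adj := Classical.decRel _
  have hΔ := maxDegree_piBoxProd G
  refine ⟨acyclicChromaticIndex_eq_maxDegree ?_, hΔ⟩
  rw [hΔ]
  exact acyclicEdgeColorable_piBoxProd hconn hcol ((heq i₁ ▸ hi₁).trans_le (hi₀ i₁)) hi₀

/-- If `G₁, …, G_k` are connected nontrivial finite graphs with `a'(Gᵢ) = Δ(Gᵢ)` for
each `i` and `max_i a'(Gᵢ) > 1`, then
`a'(G₁ □ ⋯ □ G_k) = Δ(G₁ □ ⋯ □ G_k) = Δ(G₁) + ⋯ + Δ(G_k)`. -/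
theorem acyclicChromaticIndex_piBoxProd {k : ℕ} (hk : 0 < k) {V : Fin k → Type*}
    [∀ i, Fintype (V i)] [∀ i, Nontrivial (V i)] (G : ∀ i, SimpleGraph (V i))
    [∀ i, DecidableRel (G i).Adj] (hconn : ∀ i, (G i).Connected)
    (heq : ∀ i, acyclicChromaticIndex (G i) = (G i).maxDegree)
    (hmax : ∃ i, 1 < acyclicChromaticIndex (G i)) :
    acyclicChromaticIndex (piBoxProd G) =
        @SimpleGraph.maxDegree _ (piBoxProd G) _ (Classical.decRel _) ∧
      @SimpleGraph.maxDegree _ (piBoxProd G) _ (Classical.decRel _) =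
        ∑ i, (G i).maxDegree :=
  acyclicChromaticIndex_piBoxProd_general G hconn heq hmax
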